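/- arXiv:1707.06697 — 2 statements merged into one kernel-verified Lean document; each statement's English description precedes it below -/
import Mathlib

section
/- If X_l ~ Gamma(α_l, λ_l) for l = 0, 1, 2 are independent, U = X₀ + X₁, and V = X₀ + X₂, then for variograms γ₁, γ₂ the mixture correlation is ρ(s,ξ) = (1 + (γ₁(s)+γ₂(ξ))/λ₀)^{−α₀} (1 + γ₁(s)/λ₁)^{−α₁} (1 + γ₂(ξ)/λ₂)^{−α₂}, and this is a valid (positive semidefinite) correlation function. -/
open MeasureTheory ProbabilityTheory

/-- A (centered) variogram: a continuous, nonnegative, conditionally negative definite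
function vanishing at the origin. -/
def IsVariogram {d : ℕ} (γ : (Fin d → ℝ) → ℝ) : Prop :=
  Continuous γ ∧ γ 0 = 0 ∧ (∀ s, 0 ≤ γ s) ∧ (∀ s, γ (-s) = γ s) ∧
    ∀ (n : ℕ) (x : Fin n → (Fin d → ℝ)) (a : Fin n → ℝ),
      (∑ i, a i) = 0 → ∑ i, ∑ j, a i * a j * γ (x i - x j) ≤ 0

/-!
Writing `U = X₀ + X₁`, `V = X₀ + X₂`, the exponent `-γ₁ U - γ₂ V` is the linear combination
`-(γ₁ + γ₂) X₀ - γ₁ X₁ - γ₂ X₂` of independent Gamma variables, so its expectation factorises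
into three Gamma moment generating functions `(1 - t/λ)^(-α)`, evaluated at `t ≤ 0 < λ`.

For positive semidefiniteness, fix `u, v ≥ 0`. Since `γ` is conditionally negative definite,
`γ(xᵢ) + γ(xⱼ) - γ(xᵢ - xⱼ)` is positive semidefinite; by the Schur product theorem so are its
entrywise powers, hence its entrywise exponential, and conjugating by a diagonal matrix shows
that `exp(-u γ(xᵢ - xⱼ))` is positive semidefinite (Schoenberg). One more Schur product handles
`exp(-u γ₁ - v γ₂)`, and averaging over `(u, v) = (U, V) ≥ 0` preserves positive semidefiniteness.
-/

namespace Matrix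

open Finset

variable {ι : Type*} [Fintype ι]

lemma posSemidef_iff_sum_mul_mul_nonneg {M : Matrix ι ι ℝ} :
    M.PosSemidef ↔ M.IsSymm ∧ ∀ x : ι → ℝ, 0 ≤ ∑ i, ∑ j, x i * x j * M i j := by
  rw [posSemidef_iff_dotProduct_mulVec, isHermitian_iff_isSymm]
  refine and_congr_right fun _ => forall_congr' fun x => ?_
  simp only [star_trivial, dotProduct, mulVec, mul_sum]
  exact Iff.of_eq (congrArg _ (sum_congr rfl fun i _ => sum_congr rfl fun j _ => by ring))

lemma PosSemidef.map_pow {M : Matrix ι ι ℝ} (hM : M.PosSemidef) (m : ℕ) :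
    (M.map (· ^ m)).PosSemidef := by
  induction m with
  | zero =>
    convert posSemidef_vecMulVec_self_star (1 : ι → ℝ) using 1
    ext i j
    simp [vecMulVec]
  | succ m ih =>
    have h : M.map (· ^ (m + 1)) = M.map (· ^ m) ⊙ M := by
      ext i j
      simp [hadamard_apply, pow_succ]
    exact h ▸ ih.hadamard hM

lemma PosSemidef.map_exp {M : Matrix ι ι ℝ} (hM : M.PosSemidef) :
    (M.map Real.exp).PosSemidef := by
  refine posSemidef_iff_sum_mul_mul_nonneg.2
    ⟨(isHermitian_iff_isSymm.1 hM.isHermitian).map _, fun x => ?_⟩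
  have hexp : ∀ i j, HasSum (fun m : ℕ => (x i * x j * M i j ^ m) / m.factorial)
      (x i * x j * Real.exp (M i j)) := fun i j => by
    simp_rw [mul_div_assoc, Real.exp_eq_exp_ℝ]
    exact (NormedSpace.expSeries_div_hasSum_exp (M i j)).mul_left _
  refine (hasSum_sum fun i _ => hasSum_sum fun j _ => hexp i j).nonneg fun m => ?_
  simp_rw [← sum_div]
  exact div_nonneg ((posSemidef_iff_sum_mul_mul_nonneg.1 (hM.map_pow m)).2 x)
    m.factorial.cast_nonneg

lemma posSemidef_integral {Ω : Type*} [MeasurableSpace Ω] {μ : Measure Ω}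
    (K : Ω → Matrix ι ι ℝ) (hK : ∀ i j, Integrable (fun ω => K ω i j) μ)
    (hpos : ∀ᵐ ω ∂μ, (K ω).PosSemidef) :
    (of fun i j => ∫ ω, K ω i j ∂μ).PosSemidef := by
  have hquad := hpos.mono fun ω hω => posSemidef_iff_sum_mul_mul_nonneg.1 hω
  refine posSemidef_iff_sum_mul_mul_nonneg.2 ⟨IsSymm.ext fun i j => ?_, fun x => ?_⟩
  · exact integral_congr_ae (hquad.mono fun ω hω => hω.1.apply i j)
  · calc 0 ≤ ∫ ω, ∑ i, ∑ j, x i * x j * K ω i j ∂μ :=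
          integral_nonneg_of_ae (hquad.mono fun ω hω => hω.2 x)
      _ = ∑ i, ∑ j, x i * x j * ∫ ω, K ω i j ∂μ := by
        rw [integral_finsetSum _ fun i _ =>
          integrable_finsetSum _ fun j _ => (hK i j).const_mul _]
        refine sum_congr rfl fun i _ => ?_
        rw [integral_finsetSum _ fun j _ => (hK i j).const_mul _]
        exact sum_congr rfl fun j _ => integral_const_mul _ _

end Matrix

namespace IsVariogram

open Matrix Finset
open scoped Matrix

variable {d n : ℕ} {γ : (Fin d → ℝ) → ℝ}

lemma nonneg (hγ : IsVariogram γ) (s : Fin d → ℝ) : 0 ≤ γ s := hγ.2.2.1 s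

lemma posSemidef_add_sub (hγ : IsVariogram γ) (x : Fin n → Fin d → ℝ) :
    (of fun i j => γ (x i) + γ (x j) - γ (x i - x j)).PosSemidef := by
  obtain ⟨-, h0, -, hneg, hcnd⟩ := hγ
  refine posSemidef_iff_sum_mul_mul_nonneg.2 ⟨IsSymm.ext fun i j => ?_, fun b => ?_⟩
  · rw [of_apply, of_apply, ← neg_sub (x i) (x j), hneg, add_comm (γ (x j))]
  · -- Adjoin the point `0` with weight `-∑ b`, so that conditional negative definiteness applies.
    set y : Fin (n + 1) → Fin d → ℝ := Fin.cons 0 x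
    set a : Fin (n + 1) → ℝ := Fin.cons (-∑ i, b i) b
    have hcnd_a := hcnd (n + 1) y a (by simp [a, Fin.sum_cons])
    have hquad : ∑ i, ∑ j, b i * b j * (γ (x i) + γ (x j) - γ (x i - x j))
        = -∑ i, ∑ j, a i * a j * γ (y i - y j) := by
      simp only [y, a, Fin.sum_univ_succ, Fin.cons_zero, Fin.cons_succ, zero_sub, sub_zero, h0,
        hneg, mul_add, mul_sub, sum_add_distrib, sum_sub_distrib]
      rw [sum_comm (f := fun i j => b i * b j * γ (x j))]
      simp only [mul_comm, mul_neg, sum_neg_distrib, ← mul_sum]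
      ring
    simp only [of_apply, hquad]
    linarith

lemma posSemidef_exp_neg_mul (hγ : IsVariogram γ) {u : ℝ} (hu : 0 ≤ u) (x : Fin n → Fin d → ℝ) :
    (of fun i j => Real.exp (-(u * γ (x i - x j)))).PosSemidef := by
  set D := diagonal fun i => Real.exp (-(u * γ (x i)))
  have h := (((hγ.posSemidef_add_sub x).smul hu).map_exp).mul_mul_conjTranspose_same D
  convert h using 1
  ext i j
  simp only [D, diagonal_conjTranspose, diagonal_mul, mul_diagonal, map_apply, Matrix.smul_apply,
    of_apply, star_trivial, smul_eq_mul, ← Real.exp_add]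
  ring_nf

lemma posSemidef_exp_neg_mul_sub_mul {k : ℕ} {γ' : (Fin k → ℝ) → ℝ} (hγ : IsVariogram γ)
    (hγ' : IsVariogram γ') {u v : ℝ} (hu : 0 ≤ u) (hv : 0 ≤ v) (x : Fin n → Fin d → ℝ)
    (y : Fin n → Fin k → ℝ) :
    (of fun i j => Real.exp (-γ (x i - x j) * u - γ' (y i - y j) * v)).PosSemidef := by
  have h : (of fun i j => Real.exp (-γ (x i - x j) * u - γ' (y i - y j) * v))
      = of (fun i j => Real.exp (-(u * γ (x i - x j))))
        ⊙ of (fun i j => Real.exp (-(v * γ' (y i - y j)))) := by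
    ext i j
    simp only [hadamard_apply, of_apply, ← Real.exp_add]
    ring_nf
  exact h ▸ (hγ.posSemidef_exp_neg_mul hu x).hadamard (hγ'.posSemidef_exp_neg_mul hv y)

lemma posSemidef_integral_exp_neg_mul_sub_mul {Ω : Type*} [MeasurableSpace Ω] {μ : Measure Ω}
    [IsFiniteMeasure μ] {k : ℕ} {γ' : (Fin k → ℝ) → ℝ} (hγ : IsVariogram γ)
    (hγ' : IsVariogram γ') {U V : Ω → ℝ} (hU : AEMeasurable U μ) (hV : AEMeasurable V μ)
    (hU_nonneg : ∀ᵐ ω ∂μ, 0 ≤ U ω) (hV_nonneg : ∀ᵐ ω ∂μ, 0 ≤ V ω) (x : Fin n → Fin d → ℝ)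
    (y : Fin n → Fin k → ℝ) :
    (of fun i j => ∫ ω, Real.exp (-γ (x i - x j) * U ω - γ' (y i - y j) * V ω) ∂μ).PosSemidef := by
  refine posSemidef_integral (fun ω => of fun i j =>
    Real.exp (-γ (x i - x j) * U ω - γ' (y i - y j) * V ω)) (fun i j => ?_) ?_
  · have hexponent : ∀ᵐ ω ∂μ, -γ (x i - x j) * U ω - γ' (y i - y j) * V ω ≤ 0 := by
      filter_upwards [hU_nonneg, hV_nonneg] with ω hu hv
      nlinarith [mul_nonneg (hγ.nonneg (x i - x j)) hu, mul_nonneg (hγ'.nonneg (y i - y j)) hv]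
    simpa using integrable_exp_mul_of_le 1 0 zero_le_one (by fun_prop) hexponent
  · filter_upwards [hU_nonneg, hV_nonneg] with ω hu hv
    exact hγ.posSemidef_exp_neg_mul_sub_mul hγ' hu hv x y

end IsVariogram

namespace ProbabilityTheory

lemma exp_mul_mul_gammaPDFReal {a r t : ℝ} (hr : 0 ≤ r) (ht : t < r) (x : ℝ) :
    Real.exp (t * x) * gammaPDFReal a r x = (r / (r - t)) ^ a * gammaPDFReal a (r - t) x := by
  have hrt : 0 < r - t := by linarith
  unfold gammaPDFReal
  split_ifs
  · have hexp : Real.exp (t * x) * Real.exp (-(r * x)) = Real.exp (-((r - t) * x)) := by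
      rw [← Real.exp_add]; ring_nf
    rw [Real.div_rpow hr hrt.le, ← hexp]
    field_simp
  · simp

lemma integral_gammaPDFReal {a r : ℝ} (ha : 0 < a) (hr : 0 < r) :
    ∫ x, gammaPDFReal a r x = 1 := by
  rw [integral_eq_lintegral_of_nonneg_ae (ae_of_all _ (gammaPDFReal_nonneg ha hr))
    (measurable_gammaPDFReal a r).aestronglyMeasurable]
  simp [← gammaPDF_eq, gammaPDFReal, lintegral_gammaPDF_eq_one ha hr]

lemma mgf_id_gammaMeasure {a r t : ℝ} (ha : 0 < a) (hr : 0 < r) (ht : t < r) :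
    mgf id (gammaMeasure a r) t = (1 - t / r) ^ (-a) := by
  have hrt : 0 < r - t := by linarith
  calc mgf id (gammaMeasure a r) t = ∫ x, gammaPDFReal a r x * Real.exp (t * x) := by
        rw [mgf, gammaMeasure, integral_withDensity_eq_integral_toReal_smul
          (f := gammaPDF a r)
          (measurable_gammaPDFReal a r).ennreal_ofReal
          (ae_of_all _ fun _ => ENNReal.ofReal_lt_top)]
        simp [gammaPDF, ENNReal.toReal_ofReal (gammaPDFReal_nonneg ha hr _)]
    _ = (r / (r - t)) ^ a := by
        simp_rw [mul_comm (gammaPDFReal a r _), exp_mul_mul_gammaPDFReal hr.le ht]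
        rw [integral_const_mul, integral_gammaPDFReal ha hrt, mul_one]
    _ = (1 - t / r) ^ (-a) := by
        rw [one_sub_div hr.ne', Real.rpow_neg (div_pos hrt hr).le,
          ← Real.inv_rpow (div_pos hrt hr).le, inv_div]

lemma ae_nonneg_gammaMeasure {a r : ℝ} : ∀ᵐ x ∂gammaMeasure a r, 0 ≤ x := by
  simp only [ae_iff, not_le]
  exact (withDensity_apply _ measurableSet_Iio).trans (lintegral_gammaPDF_of_nonpos le_rfl)

lemma iIndepFun.integral_exp_sum_mul_of_gamma {ι Ω : Type*} [Fintype ι] [MeasurableSpace Ω]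
    {μ : Measure Ω} {X : ι → Ω → ℝ} (hindep : iIndepFun X μ) (hmeas : ∀ l, Measurable (X l))
    {α lam : ι → ℝ} (hα : ∀ l, 0 < α l) (hlam : ∀ l, 0 < lam l)
    (hGamma : ∀ l, μ.map (X l) = gammaMeasure (α l) (lam l)) {c : ι → ℝ}
    (hc : ∀ l, c l < lam l) :
    ∫ ω, Real.exp (∑ l, c l * X l ω) ∂μ = ∏ l, (1 - c l / lam l) ^ (-α l) := by
  calc ∫ ω, Real.exp (∑ l, c l * X l ω) ∂μ = mgf (∑ l, fun ω => c l * X l ω) μ 1 := by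
        simp [mgf]
    _ = ∏ l, mgf (fun ω => c l * X l ω) μ 1 :=
        (hindep.comp _ fun l => measurable_const_mul (c l)).mgf_sum
          (fun l => (hmeas l).const_mul _) _
    _ = ∏ l, mgf id (μ.map (X l)) (c l) := by
        simp_rw [mgf_const_mul, mul_one, mgf_id_map (hmeas _).aemeasurable]
    _ = ∏ l, (1 - c l / lam l) ^ (-α l) := by
        simp_rw [hGamma, mgf_id_gammaMeasure (hα _) (hlam _) (hc _)]

end ProbabilityTheory

/-- If `X l ~ Gamma(α l, l l)` for `l = 0, 1, 2` are independent, `U = X₀ + X₁` and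
`V = X₀ + X₂`, then for variograms `γ₁, γ₂` the mixture correlation
`ρ(s,ξ) = E[exp(-γ₁(s) U - γ₂(ξ) V)]` equals
`(1 + (γ₁(s)+γ₂(ξ))/λ₀)^(-α₀) (1 + γ₁(s)/λ₁)^(-α₁) (1 + γ₂(ξ)/λ₂)^(-α₂)`, and this is a
valid (positive semidefinite) correlation function. -/
theorem gamma_mixture_correlation {d k : ℕ}
    {Ω : Type*} [MeasurableSpace Ω] (μ : Measure Ω) [IsProbabilityMeasure μ]
    (X : Fin 3 → Ω → ℝ) (hmeas : ∀ l, Measurable (X l))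
    (α lam : Fin 3 → ℝ) (hα : ∀ l, 0 < α l) (hlam : ∀ l, 0 < lam l)
    (hGamma : ∀ l, Measure.map (X l) μ = gammaMeasure (α l) (lam l))
    (hIndep : iIndepFun X μ)
    (γ₁ : (Fin d → ℝ) → ℝ) (γ₂ : (Fin k → ℝ) → ℝ)
    (hγ₁ : IsVariogram γ₁) (hγ₂ : IsVariogram γ₂)
    (ρ : (Fin d → ℝ) → (Fin k → ℝ) → ℝ)
    (hρ : ∀ s ξ, ρ s ξ
      = ∫ ω, Real.exp (-γ₁ s * (X 0 ω + X 1 ω) - γ₂ ξ * (X 0 ω + X 2 ω)) ∂μ) :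
    (∀ (s : Fin d → ℝ) (ξ : Fin k → ℝ),
        ρ s ξ = (1 + (γ₁ s + γ₂ ξ) / lam 0) ^ (-(α 0))
          * (1 + γ₁ s / lam 1) ^ (-(α 1)) * (1 + γ₂ ξ / lam 2) ^ (-(α 2))) ∧
      ∀ (n : ℕ) (s : Fin n → (Fin d → ℝ)) (ξ : Fin n → (Fin k → ℝ)) (a : Fin n → ℝ),
        0 ≤ ∑ i, ∑ j, a i * a j * ρ (s i - s j) (ξ i - ξ j) := by
  refine ⟨fun s ξ => ?_, fun n s ξ a => ?_⟩
  · have h₁ := hγ₁.nonneg s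
    have h₂ := hγ₂.nonneg ξ
    have hlin : ∀ ω, -γ₁ s * (X 0 ω + X 1 ω) - γ₂ ξ * (X 0 ω + X 2 ω)
        = ∑ l, ![-(γ₁ s + γ₂ ξ), -γ₁ s, -γ₂ ξ] l * X l ω := fun ω => by
      simp [Fin.sum_univ_three]; ring
    have hc : ∀ l, ![-(γ₁ s + γ₂ ξ), -γ₁ s, -γ₂ ξ] l < lam l := fun l => by
      have := hlam l
      fin_cases l <;> simp at this ⊢ <;> linarith
    simp_rw [hρ, hlin, hIndep.integral_exp_sum_mul_of_gamma hmeas hα hlam hGamma hc,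
      Fin.prod_univ_three]
    simp only [Matrix.cons_val, neg_div, sub_neg_eq_add]
  · have hX_nonneg : ∀ l, ∀ᵐ ω ∂μ, 0 ≤ X l ω := fun l =>
      ae_of_ae_map (hmeas l).aemeasurable (hGamma l ▸ ae_nonneg_gammaMeasure)
    have hU : ∀ᵐ ω ∂μ, 0 ≤ X 0 ω + X 1 ω := by
      filter_upwards [hX_nonneg 0, hX_nonneg 1] with ω h0 h1 using add_nonneg h0 h1
    have hV : ∀ᵐ ω ∂μ, 0 ≤ X 0 ω + X 2 ω := by
      filter_upwards [hX_nonneg 0, hX_nonneg 2] with ω h0 h2 using add_nonneg h0 h2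
    have hρ_psd := hγ₁.posSemidef_integral_exp_neg_mul_sub_mul hγ₂
      ((hmeas 0).add (hmeas 1)).aemeasurable ((hmeas 0).add (hmeas 2)).aemeasurable hU hV s ξ
    simpa [hρ] using (Matrix.posSemidef_iff_sum_mul_mul_nonneg.1 hρ_psd).2 a
end

section
/- The function C_{ij}(h, δ) = σ_i σ_j (1 + δ_{ij} + h/φ)^{−α₀} (1 + h/φ)^{−α₁} (1 + δ_{ij})^{−α₂}, where δ_{ij} = ‖ξ_i − ξ_j‖ for latent points ξ₁,…,ξ_p ∈ ℝ^k and h = ‖s − s'‖, is a valid cross-covariance function on ℝ^d for any σ_i ∈ ℝ, φ > 0, α₀, α₁, α₂ ≥ 0, provided h (Euclidean distance in ℝ^d, d ≤ 3 with exponent-1 variogram γ₁(h) = h/φ being valid) and δ are valid variograms. -/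
/-
Each of the four factors of `C` is a positive semidefinite kernel on `Fin n × Fin p`, so their
entrywise product is one by the Schur product theorem. A factor `(1 + γ)^(-α)` is the Gamma mixture
`Γ(α)⁻¹ ∫ t^(α-1) e^(-t) e^(-tγ) dt` of the kernels `e^(-tγ)`, which for `γ = δ`, `h/φ` and
`δ + h/φ` are Hadamard products of Laplace kernels `e^(-c‖x - y‖)`. The Laplace kernel is in turn a
mixture of Gaussian kernels, `e^(-a) = 2/√π ∫ e^(-t²) e^(-(a/2t)²) dt` (subordination), and the
Gaussian kernel `e^(-‖x‖²) e^(2⟪x, y⟫) e^(-‖y‖²)` is positive semidefinite because the entrywise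
exponential of a Gram matrix is a nonnegative series of its Schur powers.
-/

open Matrix MeasureTheory Set Real

section Substitution

variable {E : Type*} [NormedAddCommGroup E] [NormedSpace ℝ E] {c : ℝ}

lemma hasDerivWithinAt_sub_div {t : ℝ} (ht : t ∈ Ioi 0) :
    HasDerivWithinAt (fun t => t - c / t) (1 + c / t ^ 2) (Ioi 0) t :=
  ((hasDerivAt_id' t).sub ((hasDerivAt_const t c).div (hasDerivAt_id' t)
    (ne_of_gt ht))).hasDerivWithinAt.congr_deriv (by field_simp; ring)

lemma injOn_sub_div_Ioi (hc : 0 ≤ c) : InjOn (fun t => t - c / t) (Ioi 0) :=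
  fun a (ha : 0 < a) b (hb : 0 < b) hab => by
    have : (a - b) * (a * b + c) = 0 := by
      field_simp at hab
      linear_combination hab
    rcases mul_eq_zero.mp this with h | h
    · linarith
    · nlinarith [mul_pos ha hb]

lemma image_sub_div_Ioi (hc : 0 < c) : (fun t => t - c / t) '' Ioi 0 = univ := by
  refine eq_univ_of_forall fun w => ?_
  -- `w` is attained at the positive root of `t ^ 2 - w * t - c`
  have hsq := sq_sqrt (by positivity : 0 ≤ w ^ 2 + 4 * c)
  have hpos : 0 < w + √(w ^ 2 + 4 * c) := by nlinarith [sqrt_nonneg (w ^ 2 + 4 * c)]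
  refine ⟨(w + √(w ^ 2 + 4 * c)) / 2, div_pos hpos two_pos, ?_⟩
  field_simp
  linear_combination hsq

lemma integral_comp_sub_div_Ioi (hc : 0 < c) (g : ℝ → E) :
    ∫ t in Ioi 0, (1 + c / t ^ 2) • g (t - c / t) = ∫ w, g w := by
  conv_rhs => rw [← setIntegral_univ, ← image_sub_div_Ioi hc,
    integral_image_eq_integral_abs_deriv_smul measurableSet_Ioi
      (fun t ht => hasDerivWithinAt_sub_div ht) (injOn_sub_div_Ioi hc.le)]
  refine setIntegral_congr_fun measurableSet_Ioi fun t (ht : 0 < t) => ?_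
  rw [abs_of_pos (by positivity)]

lemma integrableOn_comp_sub_div_Ioi (hc : 0 < c) {g : ℝ → E} (hg : Integrable g) :
    IntegrableOn (fun t => (1 + c / t ^ 2) • g (t - c / t)) (Ioi 0) := by
  have := (integrableOn_image_iff_integrableOn_abs_deriv_smul measurableSet_Ioi
    (fun t ht => hasDerivWithinAt_sub_div ht) (injOn_sub_div_Ioi hc.le) g).mp
    (by simpa [image_sub_div_Ioi hc] using hg)
  refine this.congr_fun (fun t (ht : 0 < t) => ?_) measurableSet_Ioi
  dsimp only
  rw [abs_of_pos (by positivity)]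

lemma integral_comp_div_Ioi (hc : 0 < c) (g : ℝ → E) :
    ∫ t in Ioi 0, (c / t ^ 2) • g (c / t) = ∫ t in Ioi 0, g t := by
  have himage : (fun t => c / t) '' Ioi 0 = Ioi 0 := by
    ext w
    refine ⟨fun ⟨t, ht, hw⟩ => hw ▸ div_pos hc ht, fun hw => ⟨c / w, div_pos hc hw, ?_⟩⟩
    field_simp
  have hderiv (t : ℝ) (ht : t ∈ Ioi 0) :
      HasDerivWithinAt (fun t => c / t) (-(c / t ^ 2)) (Ioi 0) t :=
    ((hasDerivAt_const t c).div (hasDerivAt_id' t) (ne_of_gt ht)).hasDerivWithinAt.congr_deriv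
      (by field_simp; ring)
  conv_rhs => rw [← himage, integral_image_eq_integral_abs_deriv_smul measurableSet_Ioi hderiv
    ((mul_right_injective₀ hc.ne').comp inv_injective).injOn]
  refine setIntegral_congr_fun measurableSet_Ioi fun t (ht : 0 < t) => ?_
  rw [abs_neg, abs_of_pos (by positivity)]

end Substitution

theorem integral_exp_neg_sub_div_sq {c : ℝ} (hc : 0 ≤ c) :
    ∫ t in Ioi (0 : ℝ), exp (-(t - c / t) ^ 2) = √π / 2 := by
  rcases hc.eq_or_lt with rfl | hc
  · simpa using integral_gaussian_Ioi 1
  set g : ℝ → ℝ := fun t => exp (-(t - c / t) ^ 2)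
  -- `w = t - c / t` turns `∫ (1 + c / t ^ 2) g` into the Gaussian integral, while `t ↦ c / t`
  -- preserves `g` and turns `∫ g` into `∫ (c / t ^ 2) g`.
  have hsum : ∫ t in Ioi 0, (1 + c / t ^ 2) * g t = √π := by
    simpa using (integral_comp_sub_div_Ioi hc fun w => exp (-w ^ 2)).trans
      (by simpa using integral_gaussian 1)
  have hsymm : ∫ t in Ioi 0, c / t ^ 2 * g t = ∫ t in Ioi 0, g t := by
    rw [← integral_comp_div_Ioi hc g]
    refine setIntegral_congr_fun measurableSet_Ioi fun t (ht : 0 < t) => ?_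
    simp only [g, smul_eq_mul]
    congr 3
    field_simp
    ring
  have hint : IntegrableOn (fun t => (1 + c / t ^ 2) * g t) (Ioi 0) :=
    integrableOn_comp_sub_div_Ioi hc (g := fun w => exp (-w ^ 2))
      (by simpa using integrable_exp_neg_mul_sq one_pos)
  have hdom (f : ℝ → ℝ) (hf : AEStronglyMeasurable f)
      (hbound : ∀ t > 0, ‖f t‖ ≤ (1 + c / t ^ 2) * g t) : IntegrableOn f (Ioi 0) :=
    hint.mono' hf.restrict ((ae_restrict_iff' measurableSet_Ioi).mpr (.of_forall hbound))
  have hg_int : IntegrableOn g (Ioi 0) := hdom g (by fun_prop) fun t ht => by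
    rw [norm_of_nonneg (exp_pos _).le]
    nlinarith [exp_pos (-(t - c / t) ^ 2), (by positivity : 0 ≤ c / t ^ 2)]
  have hcg_int : IntegrableOn (fun t => c / t ^ 2 * g t) (Ioi 0) :=
    hdom _ (by fun_prop) fun t ht => by
      rw [norm_of_nonneg (by positivity)]
      nlinarith [exp_pos (-(t - c / t) ^ 2)]
  simp_rw [add_mul, one_mul] at hsum
  rw [integral_add hg_int hcg_int, hsymm] at hsum
  linarith

theorem exp_neg_eq_integral_exp_neg_sq {a : ℝ} (ha : 0 ≤ a) :
    exp (-a) = 2 / √π * ∫ t in Ioi (0 : ℝ), exp (-t ^ 2) * exp (-(a / (2 * t)) ^ 2) := by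
  have hsplit : EqOn (fun t => exp (-t ^ 2) * exp (-(a / (2 * t)) ^ 2))
      (fun t => exp (-a) * exp (-(t - a / 2 / t) ^ 2)) (Ioi 0) := fun t (ht : 0 < t) => by
    simp only [← exp_add]
    congr 1
    field_simp
    ring
  rw [setIntegral_congr_fun measurableSet_Ioi hsplit, integral_const_mul,
    integral_exp_neg_sub_div_sq (by positivity)]
  field_simp

theorem one_add_rpow_neg_eq_integral {α g : ℝ} (hα : 0 < α) (hg : 0 < 1 + g) :
    (1 + g) ^ (-α) =
      (Gamma α)⁻¹ * ∫ t in Ioi (0 : ℝ), t ^ (α - 1) * exp (-t) * exp (-(t * g)) := by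
  have hexp (t : ℝ) : t ^ (α - 1) * exp (-t) * exp (-(t * g)) =
      t ^ (α - 1) * exp (-((1 + g) * t)) := by
    rw [mul_assoc, ← exp_add]
    ring_nf
  simp only [hexp, integral_rpow_mul_exp_neg_mul_Ioi hα hg, one_div, inv_rpow hg.le,
    rpow_neg hg.le]
  field_simp [(Gamma_pos_of_pos hα).ne']

namespace Matrix

variable {ι : Type*}

lemma PosSemidef.apply_comm {M : Matrix ι ι ℝ} (hM : M.PosSemidef) (i j : ι) :
    M j i = M i j := by
  simpa using hM.isHermitian.apply i j

section Fintype

variable [Fintype ι]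

lemma posSemidef_of_sum_mul_nonneg {M : Matrix ι ι ℝ} (hM : ∀ i j, M j i = M i j)
    (h : ∀ x : ι → ℝ, 0 ≤ ∑ i, ∑ j, x i * M i j * x j) : M.PosSemidef := by
  refine .of_dotProduct_mulVec_nonneg (IsHermitian.ext fun i j => hM i j) fun x => ?_
  simpa [dotProduct, mulVec, Finset.mul_sum, mul_assoc, mul_comm, mul_left_comm] using h x

lemma PosSemidef.sum_mul_nonneg {M : Matrix ι ι ℝ} (hM : M.PosSemidef) (x : ι → ℝ) :
    0 ≤ ∑ i, ∑ j, x i * M i j * x j := by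
  simpa [dotProduct, mulVec, Finset.mul_sum, mul_assoc, mul_comm, mul_left_comm] using
    hM.dotProduct_mulVec_nonneg x

lemma posSemidef_of_hasSum {β : Type*} {A : β → Matrix ι ι ℝ} {M : Matrix ι ι ℝ}
    (hA : ∀ b, (A b).PosSemidef) (hM : HasSum A M) : M.PosSemidef := by
  have hentry (i j : ι) : HasSum (fun b => A b i j) (M i j) :=
    Pi.hasSum.mp (Pi.hasSum.mp hM i) j
  refine posSemidef_of_sum_mul_nonneg (fun i j => (hentry j i).unique ?_) fun x => ?_
  · simpa only [(hA _).apply_comm i j] using hentry i j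
  · exact HasSum.nonneg (fun b => (hA b).sum_mul_nonneg x) <| hasSum_sum fun i _ =>
      hasSum_sum fun j _ => ((hentry i j).mul_left (x i)).mul_right (x j)

lemma posSemidef_of_integral {T : Type*} [MeasurableSpace T] {μ : Measure T}
    {K : T → Matrix ι ι ℝ} (hK : ∀ᵐ t ∂μ, (K t).PosSemidef)
    (hint : ∀ i j, Integrable (fun t => K t i j) μ) :
    (of fun i j => ∫ t, K t i j ∂μ).PosSemidef := by
  refine posSemidef_of_sum_mul_nonneg (fun i j => integral_congr_ae ?_) fun x => ?_
  · filter_upwards [hK] with t ht using ht.apply_comm i j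
  · have hquad : ∑ i, ∑ j, x i * (of fun i j => ∫ t, K t i j ∂μ) i j * x j
        = ∫ t, ∑ i, ∑ j, x i * K t i j * x j ∂μ := by
      rw [integral_finsetSum _ fun i _ => integrable_finsetSum _ fun j _ =>
        ((hint i j).const_mul _).mul_const _]
      refine Finset.sum_congr rfl fun i _ => ?_
      rw [integral_finsetSum _ fun j _ => ((hint i j).const_mul _).mul_const _]
      simp only [of_apply, integral_mul_const, integral_const_mul]
    rw [hquad]
    exact integral_nonneg_of_ae (hK.mono fun t ht => ht.sum_mul_nonneg x)

lemma PosSemidef.map_pow_s12 {A : Matrix ι ι ℝ} (hA : A.PosSemidef) (m : ℕ) :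
    (A.map (· ^ m)).PosSemidef := by
  induction m with
  | zero =>
    convert posSemidef_vecMulVec_self_star (fun _ : ι => (1 : ℝ))
    ext i j
    simp [vecMulVec_apply]
  | succ m ih =>
    have : A.map (· ^ (m + 1)) = A.map (· ^ m) ⊙ A := by ext; simp [pow_succ]
    exact this ▸ ih.hadamard hA

lemma PosSemidef.map_exp_s12 {A : Matrix ι ι ℝ} (hA : A.PosSemidef) : (A.map exp).PosSemidef := by
  refine posSemidef_of_hasSum
    (fun m => (hA.map_pow_s12 m).smul (by positivity : (0 : ℝ) ≤ (m.factorial : ℝ)⁻¹)) ?_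
  refine Pi.hasSum.mpr fun i => Pi.hasSum.mpr fun j => ?_
  simpa [exp_eq_exp_ℝ, div_eq_inv_mul] using NormedSpace.expSeries_div_hasSum_exp (A i j)

variable {E : Type*} [NormedAddCommGroup E] [InnerProductSpace ℝ E]

theorem posSemidef_exp_neg_mul_norm_sub_sq (v : ι → E) (r : ℝ) :
    (of fun i j => exp (-(r * ‖v i - v j‖) ^ 2)).PosSemidef := by
  set a : ι → ℝ := fun i => exp (-(r * ‖v i‖) ^ 2)
  have heq : (of fun i j => exp (-(r * ‖v i - v j‖) ^ 2)) =
      vecMulVec a (star a) ⊙ ((2 * r ^ 2) • gram ℝ v).map exp := by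
    ext i j
    simp only [of_apply, hadamard_apply, vecMulVec_apply, map_apply, smul_apply, gram_apply,
      star_trivial, a, smul_eq_mul, ← exp_add]
    rw [mul_pow, mul_pow, mul_pow, norm_sub_sq_real]
    ring_nf
  rw [heq]
  exact (posSemidef_vecMulVec_self_star a).hadamard
    ((posSemidef_gram ℝ v).smul (by positivity)).map_exp_s12

theorem posSemidef_exp_neg_mul_norm_sub (v : ι → E) {c : ℝ} (hc : 0 ≤ c) :
    (of fun i j => exp (-(c * ‖v i - v j‖))).PosSemidef := by
  set K : ℝ → Matrix ι ι ℝ := fun t =>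
    exp (-t ^ 2) • of fun i j => exp (-(c / (2 * t) * ‖v i - v j‖) ^ 2)
  have hK (t : ℝ) : (K t).PosSemidef :=
    (posSemidef_exp_neg_mul_norm_sub_sq v _).smul (exp_pos _).le
  have hint (i j : ι) : IntegrableOn (fun t => K t i j) (Ioi 0) := by
    have hmeas : Measurable fun t => K t i j := by
      simp only [K, smul_apply, of_apply, smul_eq_mul]; fun_prop
    refine (integrable_exp_neg_mul_sq one_pos).integrableOn.mono' hmeas.aestronglyMeasurable
      (.of_forall fun t => ?_)
    simp only [K, smul_apply, of_apply, smul_eq_mul, norm_mul, norm_of_nonneg (exp_pos _).le,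
      neg_one_mul]
    exact mul_le_of_le_one_right (exp_pos _).le (exp_le_one_iff.mpr (by nlinarith))
  have hmix := (posSemidef_of_integral (.of_forall hK) hint).smul (by positivity : 0 ≤ 2 / √π)
  convert hmix using 1
  ext i j
  simp only [K, of_apply, smul_apply, smul_eq_mul, mul_div_right_comm,
    exp_neg_eq_integral_exp_neg_sq (by positivity : 0 ≤ c * ‖v i - v j‖)]

end Fintype

/-- By Schoenberg's theorem, this says that `γ` is a conditionally negative definite kernel. -/
def ExpNegPosSemidef (γ : ι → ι → ℝ) : Prop :=
  ∀ t : ℝ, 0 ≤ t → (of fun i j => exp (-(t * γ i j))).PosSemidef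

theorem expNegPosSemidef_norm_sub [Fintype ι] {E : Type*} [NormedAddCommGroup E]
    [InnerProductSpace ℝ E] (v : ι → E) : ExpNegPosSemidef fun i j => ‖v i - v j‖ :=
  fun _ ht => posSemidef_exp_neg_mul_norm_sub v ht

namespace ExpNegPosSemidef

variable {γ η : ι → ι → ℝ}

theorem add (hγ : ExpNegPosSemidef γ) (hη : ExpNegPosSemidef η) :
    ExpNegPosSemidef fun i j => γ i j + η i j := fun t ht => by
  have heq : (of fun i j => exp (-(t * (γ i j + η i j)))) =
      (of fun i j => exp (-(t * γ i j))) ⊙ of fun i j => exp (-(t * η i j)) := by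
    ext i j
    simp only [of_apply, hadamard_apply, ← exp_add]
    ring_nf
  rw [heq]
  exact (hγ t ht).hadamard (hη t ht)

theorem div_const (hγ : ExpNegPosSemidef γ) {φ : ℝ} (hφ : 0 ≤ φ) :
    ExpNegPosSemidef fun i j => γ i j / φ := fun t ht => by
  simpa only [mul_div_assoc', div_mul_eq_mul_div] using hγ (t / φ) (div_nonneg ht hφ)

theorem posSemidef_one_add_rpow_neg [Fintype ι] (hγ : ExpNegPosSemidef γ)
    (hγ0 : ∀ i j, 0 ≤ γ i j) {α : ℝ} (hα : 0 ≤ α) :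
    (of fun i j => (1 + γ i j) ^ (-α)).PosSemidef := by
  rcases hα.eq_or_lt with rfl | hα
  · simpa using hγ 0 le_rfl
  set K : ℝ → Matrix ι ι ℝ := fun t =>
    (t ^ (α - 1) * exp (-t)) • of fun i j => exp (-(t * γ i j))
  have hK : ∀ᵐ t ∂(volume.restrict (Ioi 0)), (K t).PosSemidef :=
    (ae_restrict_iff' measurableSet_Ioi).mpr <| .of_forall fun t (ht : 0 < t) =>
      (hγ t ht.le).smul (by positivity)
  have hint (i j : ι) : IntegrableOn (fun t => K t i j) (Ioi 0) := by
    have hmeas : Measurable fun t => K t i j := by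
      simp only [K, smul_apply, of_apply, smul_eq_mul]; fun_prop
    refine (GammaIntegral_convergent hα).mono' hmeas.aestronglyMeasurable
      ((ae_restrict_iff' measurableSet_Ioi).mpr <| .of_forall fun t (ht : 0 < t) => ?_)
    simp only [K, smul_apply, of_apply, smul_eq_mul, norm_mul, norm_of_nonneg (exp_pos _).le,
      norm_of_nonneg (rpow_nonneg ht.le _)]
    rw [mul_comm (exp (-t))]
    exact mul_le_of_le_one_right (by positivity)
      (exp_le_one_iff.mpr (neg_nonpos.mpr (mul_nonneg ht.le (hγ0 i j))))
  have hmix := (posSemidef_of_integral hK hint).smul (inv_nonneg.mpr (Gamma_pos_of_pos hα).le)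
  convert hmix using 1
  ext i j
  simp only [K, of_apply, smul_apply, smul_eq_mul,
    one_add_rpow_neg_eq_integral hα (by linarith [hγ0 i j] : 0 < 1 + γ i j)]

end ExpNegPosSemidef

end Matrix

theorem proposed_crossCov_valid_general {p d k : ℕ}
    (σ : Fin p → ℝ) (ξ : Fin p → EuclideanSpace ℝ (Fin k))
    (φ α₀ α₁ α₂ : ℝ) (hφ : 0 < φ) (h0 : 0 ≤ α₀) (h1 : 0 ≤ α₁) (h2 : 0 ≤ α₂) :
    ∀ (n : ℕ) (s : Fin n → EuclideanSpace ℝ (Fin d)),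
      (Matrix.of fun x y : Fin n × Fin p =>
        σ x.2 * σ y.2 *
          (1 + ‖ξ x.2 - ξ y.2‖ + ‖s x.1 - s y.1‖ / φ) ^ (-α₀) *
          (1 + ‖s x.1 - s y.1‖ / φ) ^ (-α₁) *
          (1 + ‖ξ x.2 - ξ y.2‖) ^ (-α₂)).PosSemidef := by
  intro n s
  have hδ : ExpNegPosSemidef fun x y : Fin n × Fin p => ‖ξ x.2 - ξ y.2‖ :=
    expNegPosSemidef_norm_sub _
  have hh : ExpNegPosSemidef fun x y : Fin n × Fin p => ‖s x.1 - s y.1‖ / φ :=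
    (expNegPosSemidef_norm_sub _).div_const hφ.le
  have hσ := posSemidef_vecMulVec_self_star fun x : Fin n × Fin p => σ x.2
  have hC₀ := (hδ.add hh).posSemidef_one_add_rpow_neg (fun _ _ => by positivity) h0
  have hC₁ := hh.posSemidef_one_add_rpow_neg (fun _ _ => by positivity) h1
  have hC₂ := hδ.posSemidef_one_add_rpow_neg (fun _ _ => by positivity) h2
  refine (congrArg PosSemidef ?_).mpr (((hσ.hadamard hC₀).hadamard hC₁).hadamard hC₂)
  ext x y
  simp [vecMulVec_apply, add_assoc]

/-- The cross-covariance function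
`C i j (h, δ) = σ_i σ_j (1 + δ_{ij} + h/φ)^(-α₀) (1 + h/φ)^(-α₁) (1 + δ_{ij})^(-α₂)`,
where `δ_{ij} = ‖ξ i - ξ j‖` for latent points `ξ₁, …, ξ_p ∈ ℝ^k` and `h = ‖s - s'‖`
(Euclidean distance in `ℝ^d`, `d ≤ 3`), is valid: for any locations `s₁, …, s_n` the
`np × np` block matrix of its values is positive semidefinite. -/
theorem proposed_crossCov_valid {p d k : ℕ} (hd : d ≤ 3)
    (σ : Fin p → ℝ) (ξ : Fin p → EuclideanSpace ℝ (Fin k))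
    (φ α₀ α₁ α₂ : ℝ) (hφ : 0 < φ) (h0 : 0 ≤ α₀) (h1 : 0 ≤ α₁) (h2 : 0 ≤ α₂) :
    ∀ (n : ℕ) (s : Fin n → EuclideanSpace ℝ (Fin d)),
      (Matrix.of fun x y : Fin n × Fin p =>
        σ x.2 * σ y.2 *
          (1 + ‖ξ x.2 - ξ y.2‖ + ‖s x.1 - s y.1‖ / φ) ^ (-α₀) *
          (1 + ‖s x.1 - s y.1‖ / φ) ^ (-α₁) *
          (1 + ‖ξ x.2 - ξ y.2‖) ^ (-α₂)).PosSemidef :=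
  proposed_crossCov_valid_general σ ξ φ α₀ α₁ α₂ hφ h0 h1 h2
end
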